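/- arXiv:2401.12650 — 6 statements merged into one kernel-verified Lean document; each statement's English description precedes it below -/
import Mathlib

section
/- (Noether's theorem.) Let E, ω be as in the setup, let h, f : E → ℝ be differentiable, let X_h be a Hamiltonian vector field of h and Y_f a Hamiltonian vector field of f. Assume Y_f is an infinitesimal Noether symmetry, i.e. Dh_x(Y_f(x)) = 0 for all x ∈ E (the Lie derivative of h along Y_f vanishes). Then f is a conserved quantity: for every integral curve c : ℝ → E of X_h, f(c(t)) = f(c(0)) for all t ∈ ℝ. -/
/-- **Noether's theorem.** On a symplectic vector space `(E, ω)`, let `X_h`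
be a Hamiltonian vector field of `h` and `Y_f` a Hamiltonian vector field of `f`. If `Y_f`
is an infinitesimal Noether symmetry (`Dh_x(Y_f(x)) = 0` for all `x`), then `f` is a
conserved quantity: along every integral curve `c` of `X_h`, `f(c(t)) = f(c(0))`. -/
theorem symplectic_noether
    (E : Type*) [NormedAddCommGroup E] [NormedSpace ℝ E] [FiniteDimensional ℝ E]
    (ω : E →ₗ[ℝ] E →ₗ[ℝ] ℝ)
    (halt : ∀ u : E, ω u u = 0)
    (hnd : ∀ u : E, (∀ v : E, ω u v = 0) → u = 0)
    (h f : E → ℝ) (hh : Differentiable ℝ h) (hf : Differentiable ℝ f)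
    (Xh : E → E) (hXh : ∀ x v : E, ω (Xh x) v = fderiv ℝ h x v)
    (Yf : E → E) (hYf : ∀ x v : E, ω (Yf x) v = fderiv ℝ f x v)
    (hsym : ∀ x : E, fderiv ℝ h x (Yf x) = 0)
    (c : ℝ → E) (hc : ∀ t : ℝ, HasDerivAt c (Xh (c t)) t) :
    ∀ t : ℝ, f (c t) = f (c 0) := by
  have skew : ∀ u v : E, ω u v = - ω v u := by
    intro u v
    have := halt (u + v)
    simp [map_add, halt] at this
    linarith
  have key : ∀ t : ℝ, HasDerivAt (fun t => f (c t)) 0 t := by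
    intro t
    have hcomp := (hf (c t)).hasFDerivAt.comp_hasDerivAt t (hc t)
    have : fderiv ℝ f (c t) (Xh (c t)) = 0 := by
      rw [← hYf, skew, hXh, hsym, neg_zero]
    rwa [this] at hcomp
  intro t
  exact (is_const_of_deriv_eq_zero (fun s => (key s).differentiableAt)
    (fun s => (key s).deriv) t 0)
end

section
/- Let E, ω be as in the setup and let f, g : E → ℝ be twice continuously differentiable with differentiable Hamiltonian vector fields X_f, X_g. Then the Lie bracket [X_g, X_f] is a Hamiltonian vector field of the Poisson bracket {f,g}, i.e. X_{{f,g}} = [X_g, X_f]: for all x, v ∈ E, ω([X_g,X_f](x), v) = D({f,g})_x(v), where [X_g,X_f](x) = D(X_f)_x(X_g(x)) − D(X_g)_x(X_f(x)) and {f,g}(y) = ω(X_f(y), X_g(y)). -/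
/-- On a symplectic vector space `(E, ω)`, for `C²` functions `f, g`
with differentiable Hamiltonian vector fields `X_f, X_g`, the Lie bracket
`[X_g, X_f](x) = D(X_f)_x(X_g(x)) − D(X_g)_x(X_f(x))` is a Hamiltonian vector field of the
Poisson bracket `{f,g}(y) = ω(X_f(y), X_g(y))`:
`ω([X_g,X_f](x), v) = D({f,g})_x(v)` for all `x, v`. -/
theorem symplectic_bracket_hamiltonian_of_poisson
    (E : Type*) [NormedAddCommGroup E] [NormedSpace ℝ E] [FiniteDimensional ℝ E]
    (ω : E →ₗ[ℝ] E →ₗ[ℝ] ℝ)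
    (halt : ∀ u : E, ω u u = 0)
    (hnd : ∀ u : E, (∀ v : E, ω u v = 0) → u = 0)
    (f g : E → ℝ) (hf : ContDiff ℝ 2 f) (hg : ContDiff ℝ 2 g)
    (Xf Xg : E → E)
    (hXf : ∀ x v : E, ω (Xf x) v = fderiv ℝ f x v) (hdXf : Differentiable ℝ Xf)
    (hXg : ∀ x v : E, ω (Xg x) v = fderiv ℝ g x v) (hdXg : Differentiable ℝ Xg) :
    ∀ x v : E,
      ω (fderiv ℝ Xf x (Xg x) - fderiv ℝ Xg x (Xf x)) v =
        fderiv ℝ (fun y => ω (Xf y) (Xg y)) x v := by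
  classical
  -- continuous bilinear version of ω
  let B : E →L[ℝ] E →L[ℝ] ℝ :=
    LinearMap.toContinuousLinearMap
      { toFun := fun u => LinearMap.toContinuousLinearMap (ω u)
        map_add' := by intro u w; ext z; simp
        map_smul' := by intro c u; ext z; simp }
  have hBapp : ∀ u v : E, B u v = ω u v := fun u v => rfl
  -- ω is antisymmetric
  have hskew : ∀ u v : E, ω u v = - ω v u := by
    intro u v
    have h := halt (u + v)
    simp only [map_add, LinearMap.add_apply, halt] at h
    linarith
  -- key symmetry lemma from symmetry of the second derivative
  have key : ∀ (h : E → ℝ) (X : E → E), ContDiff ℝ 2 h →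
      (∀ x v : E, ω (X x) v = fderiv ℝ h x v) → Differentiable ℝ X →
      ∀ x u v : E, ω (fderiv ℝ X x u) v = ω (fderiv ℝ X x v) u := by
    intro h X hh hX hdX x u v
    have hfd : ∀ y : E, fderiv ℝ h y = B (X y) := by
      intro y; ext w; exact (hX y w).symm
    have hder : ∀ y : E, HasFDerivAt h (B (X y)) y := by
      intro y
      have := ((hh.differentiable (by norm_num)) y).hasFDerivAt
      rwa [hfd y] at this
    have hX' : HasFDerivAt X (fderiv ℝ X x) x := (hdX x).hasFDerivAt
    have hB' : HasFDerivAt (fun y => B (X y)) (B.comp (fderiv ℝ X x)) x :=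
      (B.hasFDerivAt.comp x hX')
    have hsymm := second_derivative_symmetric hder hB' u v
    simpa [hBapp] using hsymm
  intro x v
  -- derivative of the Poisson bracket
  have hXf' : HasFDerivAt Xf (fderiv ℝ Xf x) x := (hdXf x).hasFDerivAt
  have hXg' : HasFDerivAt Xg (fderiv ℝ Xg x) x := (hdXg x).hasFDerivAt
  have hc : HasFDerivAt (fun y => B (Xf y)) (B.comp (fderiv ℝ Xf x)) x :=
    B.hasFDerivAt.comp x hXf'
  have hF : HasFDerivAt (fun y => B (Xf y) (Xg y))
      ((B (Xf x)).comp (fderiv ℝ Xg x) + (B.comp (fderiv ℝ Xf x)).flip (Xg x)) x :=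
    hc.clm_apply hXg'
  have hFeq : (fun y => ω (Xf y) (Xg y)) = fun y => B (Xf y) (Xg y) := by
    funext y; rw [hBapp]
  have hfd : fderiv ℝ (fun y => ω (Xf y) (Xg y)) x v =
      B (Xf x) (fderiv ℝ Xg x v) + B (fderiv ℝ Xf x v) (Xg x) := by
    rw [hFeq, hF.fderiv]
    simp
  rw [hfd]
  have h1 : ω (fderiv ℝ Xf x (Xg x)) v = ω (fderiv ℝ Xf x v) (Xg x) :=
    key f Xf hf hXf hdXf x (Xg x) v
  have h2 : ω (fderiv ℝ Xg x (Xf x)) v = ω (fderiv ℝ Xg x v) (Xf x) :=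
    key g Xg hg hXg hdXg x (Xf x) v
  have h3 : ω (fderiv ℝ Xg x v) (Xf x) = - ω (Xf x) (fderiv ℝ Xg x v) :=
    hskew _ _
  simp only [map_sub, LinearMap.sub_apply, hBapp, h1, h2, h3]
  ring
end

section
/- (Characterization of canonical transformations by Poisson brackets.) Let E, ω be as in the setup, let c be a nonzero real number, and let Φ : E → E be a C¹ diffeomorphism (Φ is bijective and both Φ and its inverse are continuously differentiable). Then the following are equivalent: (a) Φ is a canonical transformation of valence c, i.e. Φ*ω = cω: ω(DΦ_x(u), DΦ_x(v)) = c·ω(u,v) for all x, u, v ∈ E; (b) Φ rescales all Poisson brackets by 1/c: for all differentiable f, g : E → ℝ, all Hamiltonian vector fields X_f of f and X_g of g, and all Hamiltonian vector fields Y of f∘Φ and Z of g∘Φ, one has ω(X_f(Φ(x)), X_g(Φ(x))) = (1/c)·ω(Y(x), Z(x)) for all x ∈ E (i.e. Φ*{f,g} = (1/c){Φ*f, Φ*g}). -/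
/-!
At a point `x`, let `A = DΦ_x` and let `A†` be its `ω`-adjoint, `ω (A† p) w = ω p (A w)`.
By the chain rule the Hamiltonian vector field of `f ∘ Φ` is `A† (X_f ∘ Φ)`, and since the
linear functions `ω p` have constant Hamiltonian vector fields `p`, the bracket condition
amounts to `ω (A† p) (A† q) = c ω p q` for all `p, q`, i.e. `A A† = c`. Canonicity says
`A† A = c`. In finite dimension a one-sided inverse of an endomorphism is two-sided, so the
two conditions agree.
-/

open LinearMap (IsAdjointPair SeparatingLeft SeparatingRight)

namespace LinearMap.BilinForm

variable {K V : Type*} [Field K] [AddCommGroup V] [Module K V] {B : LinearMap.BilinForm K V}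
  {c : K}

/-- For symplectic `B`: a linear canonical transformation of valence `c`. -/
def IsConformal (B : LinearMap.BilinForm K V) (c : K) (φ : V → V) : Prop :=
  ∀ u v, B (φ u) (φ v) = c * B u v

variable {φ ψ : Module.End K V}

theorem isConformal_iff_mul_eq_smul_one (hB : B.SeparatingLeft)
    (h : IsAdjointPair B B ψ φ) : B.IsConformal c φ ↔ ψ * φ = c • 1 := by
  refine ⟨fun hφ ↦ LinearMap.ext fun u ↦ sub_eq_zero.mp <| hB _ fun v ↦ ?_, fun hψφ u v ↦ ?_⟩
  · simp [h (φ u), hφ u v]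
  · rw [← h, ← Module.End.mul_apply, hψφ]
    simp

theorem isConformal_adjoint_iff_mul_eq_smul_one (hB : B.SeparatingRight)
    (h : IsAdjointPair B B ψ φ) : B.IsConformal c ψ ↔ φ * ψ = c • 1 := by
  refine ⟨fun hψ ↦ LinearMap.ext fun q ↦ sub_eq_zero.mp <| hB _ fun p ↦ ?_, fun hφψ p q ↦ ?_⟩
  · simp [← h p, hψ p q]
  · rw [h, ← Module.End.mul_apply, hφψ]
    simp

theorem _root_.Module.End.mul_eq_smul_one_comm [FiniteDimensional K V] {a b : Module.End K V}
    (hc : c ≠ 0) : a * b = c • 1 ↔ b * a = c • 1 := by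
  rw [← inv_smul_eq_iff₀ hc, ← inv_smul_eq_iff₀ hc, ← smul_mul_assoc, ← mul_smul_comm,
    mul_eq_one_comm]

theorem isConformal_iff_isConformal_adjoint [FiniteDimensional K V] (hB : B.Nondegenerate)
    (h : IsAdjointPair B B ψ φ) (hc : c ≠ 0) : B.IsConformal c φ ↔ B.IsConformal c ψ := by
  rw [isConformal_iff_mul_eq_smul_one hB.1 h, isConformal_adjoint_iff_mul_eq_smul_one hB.2 h,
    Module.End.mul_eq_smul_one_comm hc]

end LinearMap.BilinForm

section Hamiltonian

variable {E : Type*} [NormedAddCommGroup E] [NormedSpace ℝ E] {ω : E →ₗ[ℝ] E →ₗ[ℝ] ℝ}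
  {f : E → ℝ} {X Y : E → E}

variable (ω) in
def IsHamiltonianVectorField (f : E → ℝ) (X : E → E) : Prop :=
  ∀ x v, ω (X x) v = fderiv ℝ f x v

theorem IsHamiltonianVectorField.unique (hω : SeparatingLeft ω)
    (hX : IsHamiltonianVectorField ω f X) (hY : IsHamiltonianVectorField ω f Y) : X = Y :=
  funext fun x ↦ sub_eq_zero.mp <| hω _ fun v ↦ by simp [hX x v, hY x v]

theorem isHamiltonianVectorField_const [FiniteDimensional ℝ E] (p : E) :
    IsHamiltonianVectorField ω (ω p) fun _ ↦ p := fun x v ↦ by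
  rw [← LinearMap.coe_toContinuousLinearMap' (ω p), ContinuousLinearMap.fderiv]

theorem IsHamiltonianVectorField.comp {Φ : E → E} {ψ : E → E → E}
    (hX : IsHamiltonianVectorField ω f X) (hf : Differentiable ℝ f) (hΦ : Differentiable ℝ Φ)
    (hψ : ∀ x, IsAdjointPair ω ω (ψ x) (fderiv ℝ Φ x)) :
    IsHamiltonianVectorField ω (f ∘ Φ) fun x ↦ ψ x (X (Φ x)) := fun x v ↦ by
  rw [hψ, hX, fderiv_comp x (hf _) (hΦ x)]
  rfl

end Hamiltonian

open LinearMap.BilinForm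

theorem symplectic_canonical_transformation_iff_poisson_general
    (E : Type*) [NormedAddCommGroup E] [NormedSpace ℝ E] [FiniteDimensional ℝ E]
    (ω : E →ₗ[ℝ] E →ₗ[ℝ] ℝ)
    (hnd : ∀ u : E, (∀ v : E, ω u v = 0) → u = 0)
    (c : ℝ) (hc : c ≠ 0)
    (Φ : E → E)
    (hΦ : ContDiff ℝ 1 Φ) :
    (∀ x u v : E, ω (fderiv ℝ Φ x u) (fderiv ℝ Φ x v) = c * ω u v) ↔
    (∀ f g : E → ℝ, Differentiable ℝ f → Differentiable ℝ g →
      ∀ Xf Xg Y Z : E → E,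
        (∀ x v : E, ω (Xf x) v = fderiv ℝ f x v) →
        (∀ x v : E, ω (Xg x) v = fderiv ℝ g x v) →
        (∀ x v : E, ω (Y x) v = fderiv ℝ (f ∘ Φ) x v) →
        (∀ x v : E, ω (Z x) v = fderiv ℝ (g ∘ Φ) x v) →
        ∀ x : E, ω (Xf (Φ x)) (Xg (Φ x)) = (1 / c) * ω (Y x) (Z x)) := by
  have hω : ω.Nondegenerate := Nondegenerate.ofSeparatingLeft hnd
  have hdΦ : Differentiable ℝ Φ := hΦ.differentiable one_ne_zero
  set ψ := fun x ↦ leftAdjointOfNondegenerate ω hω (fderiv ℝ Φ x)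
  have hψ (x : E) : IsAdjointPair ω ω (ψ x) (fderiv ℝ Φ x) :=
    isAdjointPairLeftAdjointOfNondegenerate ω hω _
  change (∀ x, IsConformal ω c ((fderiv ℝ Φ x : E →L[ℝ] E) : E →ₗ[ℝ] E)) ↔ _
  rw [forall_congr' fun x ↦ isConformal_iff_isConformal_adjoint hω (hψ x) hc]
  constructor
  · intro h f g hf hg Xf Xg Y Z hXf hXg hY hZ x
    rw [IsHamiltonianVectorField.unique hnd hY (IsHamiltonianVectorField.comp hXf hf hdΦ hψ),
      IsHamiltonianVectorField.unique hnd hZ (IsHamiltonianVectorField.comp hXg hg hdΦ hψ),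
      h x, one_div, inv_mul_cancel_left₀ hc]
  · intro h x p q
    have hlin (p : E) : Differentiable ℝ (ω p) := (ω p).toContinuousLinearMap.differentiable
    have hp := isHamiltonianVectorField_const (ω := ω) p
    have hq := isHamiltonianVectorField_const (ω := ω) q
    have := h (ω p) (ω q) (hlin p) (hlin q) _ _ _ _ hp hq (hp.comp (hlin p) hdΦ hψ)
      (hq.comp (hlin q) hdΦ hψ) x
    rw [this, one_div, mul_inv_cancel_left₀ hc]

/-- **Characterization of canonical transformations by Poisson brackets.**
On a symplectic vector space `(E, ω)`, let `c ≠ 0` and let `Φ` be a `C¹` diffeomorphism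
(with `C¹` inverse `Ψ`). Then `Φ` is a canonical transformation of valence `c`
(`ω(DΦ_x(u), DΦ_x(v)) = c·ω(u,v)` for all `x,u,v`) if and only if `Φ` rescales all
Poisson brackets by `1/c`: for all differentiable `f, g` with Hamiltonian vector fields
`X_f, X_g`, and Hamiltonian vector fields `Y` of `f∘Φ` and `Z` of `g∘Φ`,
`ω(X_f(Φ(x)), X_g(Φ(x))) = (1/c)·ω(Y(x), Z(x))` for all `x`. -/
theorem symplectic_canonical_transformation_iff_poisson
    (E : Type*) [NormedAddCommGroup E] [NormedSpace ℝ E] [FiniteDimensional ℝ E]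
    (ω : E →ₗ[ℝ] E →ₗ[ℝ] ℝ)
    (halt : ∀ u : E, ω u u = 0)
    (hnd : ∀ u : E, (∀ v : E, ω u v = 0) → u = 0)
    (c : ℝ) (hc : c ≠ 0)
    (Φ Ψ : E → E)
    (hΨΦ : Function.LeftInverse Ψ Φ) (hΦΨ : Function.RightInverse Ψ Φ)
    (hΦ : ContDiff ℝ 1 Φ) (hΨ : ContDiff ℝ 1 Ψ) :
    (∀ x u v : E, ω (fderiv ℝ Φ x u) (fderiv ℝ Φ x v) = c * ω u v) ↔
    (∀ f g : E → ℝ, Differentiable ℝ f → Differentiable ℝ g →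
      ∀ Xf Xg Y Z : E → E,
        (∀ x v : E, ω (Xf x) v = fderiv ℝ f x v) →
        (∀ x v : E, ω (Xg x) v = fderiv ℝ g x v) →
        (∀ x v : E, ω (Y x) v = fderiv ℝ (f ∘ Φ) x v) →
        (∀ x v : E, ω (Z x) v = fderiv ℝ (g ∘ Φ) x v) →
        ∀ x : E, ω (Xf (Φ x)) (Xg (Φ x)) = (1 / c) * ω (Y x) (Z x)) :=
  symplectic_canonical_transformation_iff_poisson_general E ω hnd c hc Φ hΦ
end

section
/- (Hamilton–Jacobi theorem.) Let Q be a finite-dimensional real normed vector space with continuous dual Q*, let Ω be the canonical symplectic form on Q × Q*, let h : Q × Q* → ℝ be differentiable with Hamiltonian vector field X_h, and let α : Q → Q* be a differentiable closed 1-form. Then α is a solution to the Hamilton–Jacobi problem — that is, the graph of α is invariant by X_h, meaning that for every x ∈ Q the Q*-component of X_h(x, α(x)) equals Dα_x applied to the Q-component of X_h(x, α(x)) — if and only if d(α*h) = 0, i.e. the Fréchet derivative of the function x ↦ h(x, α(x)) vanishes at every x ∈ Q (so that h ∘ dS is locally constant). -/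
/-!
Along the graph of `α`, the chain rule and the defining identity of `X_h` give
`d(α*h)_x v = Dα_x(v)(X₁) - X₂(v)`, where `(X₁, X₂) = X_h(x, α(x))`. Closedness of `α` turns
`Dα_x(v)(X₁)` into `Dα_x(X₁)(v)`, so `d(α*h)_x = Dα_x(X₁) - X₂`, which vanishes exactly when
the graph is invariant.
-/

section GraphPullback

variable {𝕜 E F G : Type*} [NontriviallyNormedField 𝕜]
  [NormedAddCommGroup E] [NormedSpace 𝕜 E] [NormedAddCommGroup F] [NormedSpace 𝕜 F]
  [NormedAddCommGroup G] [NormedSpace 𝕜 G]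

theorem fderiv_comp_graph_apply {h : E × F → G} {α : E → F} {x : E}
    (hh : DifferentiableAt 𝕜 h (x, α x)) (hα : DifferentiableAt 𝕜 α x) (v : E) :
    fderiv 𝕜 (fun y => h (y, α y)) x v = fderiv 𝕜 h (x, α x) (v, fderiv 𝕜 α x v) := by
  have hgraph : HasFDerivAt (fun y => (y, α y))
      ((ContinuousLinearMap.id 𝕜 E).prod (fderiv 𝕜 α x)) x :=
    (hasFDerivAt_id x).prodMk hα.hasFDerivAt
  exact congrArg (· v) (hh.hasFDerivAt.comp x hgraph).fderiv

end GraphPullback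

theorem fderiv_hamiltonian_comp_graph {Q : Type*} [NormedAddCommGroup Q] [NormedSpace ℝ Q]
    {h : Q × (Q →L[ℝ] ℝ) → ℝ} {X : Q × (Q →L[ℝ] ℝ) → Q × (Q →L[ℝ] ℝ)}
    (hX : ∀ z w : Q × (Q →L[ℝ] ℝ), w.2 (X z).1 - (X z).2 w.1 = fderiv ℝ h z w)
    {α : Q → Q →L[ℝ] ℝ} {x : Q} (hh : DifferentiableAt ℝ h (x, α x))
    (hα : DifferentiableAt ℝ α x) (hclosed : ∀ u v : Q, fderiv ℝ α x u v = fderiv ℝ α x v u) :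
    fderiv ℝ (fun y => h (y, α y)) x = fderiv ℝ α x (X (x, α x)).1 - (X (x, α x)).2 := by
  ext v
  rw [fderiv_comp_graph_apply hh hα, ← hX, sub_apply, hclosed]

theorem hamilton_jacobi_general
    (Q : Type*) [NormedAddCommGroup Q] [NormedSpace ℝ Q]
    (h : Q × (Q →L[ℝ] ℝ) → ℝ) (hh : Differentiable ℝ h)
    (X : Q × (Q →L[ℝ] ℝ) → Q × (Q →L[ℝ] ℝ))
    (hX : ∀ z w : Q × (Q →L[ℝ] ℝ), w.2 (X z).1 - (X z).2 w.1 = fderiv ℝ h z w)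
    (α : Q → Q →L[ℝ] ℝ) (hα : Differentiable ℝ α)
    (hclosed : ∀ x u v : Q, fderiv ℝ α x u v = fderiv ℝ α x v u) :
    (∀ x : Q, (X (x, α x)).2 = fderiv ℝ α x ((X (x, α x)).1)) ↔
    (∀ x : Q, fderiv ℝ (fun y => h (y, α y)) x = 0) := by
  refine forall_congr' fun x => ?_
  rw [fderiv_hamiltonian_comp_graph hX (hh _) (hα x) (hclosed x), sub_eq_zero, eq_comm]

/-- **Hamilton–Jacobi theorem.** Let `Q` be a finite-dimensional real normed
space with continuous dual `Q* = Q →L[ℝ] ℝ`, let `Ω((u,p),(v,q)) = q(u) − p(v)` be the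
canonical symplectic form on `Q × Q*`, let `X_h` be a Hamiltonian vector field of a
differentiable `h : Q × Q* → ℝ`, and let `α : Q → Q*` be a differentiable closed `1`-form.
Then the graph of `α` is invariant by `X_h` (i.e., for each `x`, the `Q*`-component of
`X_h(x, α(x))` is `Dα_x` applied to its `Q`-component) if and only if `d(α*h) = 0`, i.e.
the derivative of `x ↦ h(x, α(x))` vanishes everywhere. -/
theorem hamilton_jacobi
    (Q : Type*) [NormedAddCommGroup Q] [NormedSpace ℝ Q] [FiniteDimensional ℝ Q]
    (h : Q × (Q →L[ℝ] ℝ) → ℝ) (hh : Differentiable ℝ h)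
    (X : Q × (Q →L[ℝ] ℝ) → Q × (Q →L[ℝ] ℝ))
    (hX : ∀ z w : Q × (Q →L[ℝ] ℝ), w.2 (X z).1 - (X z).2 w.1 = fderiv ℝ h z w)
    (α : Q → Q →L[ℝ] ℝ) (hα : Differentiable ℝ α)
    (hclosed : ∀ x u v : Q, fderiv ℝ α x u v = fderiv ℝ α x v u) :
    (∀ x : Q, (X (x, α x)).2 = fderiv ℝ α x ((X (x, α x)).1)) ↔
    (∀ x : Q, fderiv ℝ (fun y => h (y, α y)) x = 0) :=
  hamilton_jacobi_general Q h hh X hX α hα hclosed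
end

section
/- (Dissipation of energy in contact mechanics.) In the linear contact model, let h : E × ℝ → ℝ be differentiable, let X be a contact Hamiltonian vector field of h, and let c : ℝ → E × ℝ be an integral curve of X, i.e. the derivative of c at each t ∈ ℝ is X(c(t)). Then the energy dissipates at rate −R(h): for every t ∈ ℝ, the function t ↦ h(c(t)) has derivative −Dh_{c(t)}(0,1) · h(c(t)) at t (the identity L_{X_h} h = −(R(h))·h along the dynamics). -/
/-! Differentiating `h` along an integral curve gives `Dh(X)`, so it suffices to evaluate
`Dh_p(X(p))` pointwise. Splitting `X = (X_E, 0) + X_ℝ · R`, the second contact equation with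
`v = X_E` (where `ω(X_E, X_E) = 0`) gives `Dh(X_E, 0) = -R(h) λ(x)(X_E)`, and the first gives
`X_ℝ = λ(x)(X_E) - h`; the `λ(x)(X_E)` terms cancel, leaving `-R(h) · h`. -/

theorem LinearMap.apply_prod_eq_apply_inl_add_smul {R E F : Type*} [Semiring R]
    [AddCommMonoid E] [Module R E] [AddCommMonoid F] [Module R F]
    (L : E × R →ₗ[R] F) (w : E × R) : L w = L (w.1, 0) + w.2 • L (0, 1) := by
  rw [← map_smul, ← map_add]
  simp

theorem apply_eq_neg_reeb_mul_of_contact_hamilton_eqns {R E : Type*} [CommRing R]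
    [AddCommGroup E] [Module R E] (lam : E →ₗ[R] E →ₗ[R] R) (L : E × R →ₗ[R] R)
    (x : E) (w : E × R) (a : R) (h₁ : w.2 - lam x w.1 = -a)
    (h₂ : ∀ v : E, lam v w.1 - lam w.1 v = L (v, 0) + L (0, 1) * lam x v) :
    L w = -L (0, 1) * a := by
  have hE : L (w.1, 0) = -(L (0, 1) * lam x w.1) := by
    rw [eq_neg_iff_add_eq_zero, ← h₂, sub_self]
  have hR : w.2 = lam x w.1 - a := by linear_combination h₁
  rw [L.apply_prod_eq_apply_inl_add_smul, hE, hR, smul_eq_mul]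
  ring

theorem contact_energy_dissipation_general
    (E : Type*) [NormedAddCommGroup E] [NormedSpace ℝ E]
    (lam : E →ₗ[ℝ] E →ₗ[ℝ] ℝ)
    (h : E × ℝ → ℝ) (hh : Differentiable ℝ h)
    (X : E × ℝ → E × ℝ)
    (hX1 : ∀ p : E × ℝ, (X p).2 - lam p.1 (X p).1 = - h p)
    (hX2 : ∀ (p : E × ℝ) (v : E),
      lam v (X p).1 - lam (X p).1 v =
        fderiv ℝ h p (v, 0) + fderiv ℝ h p ((0, 1) : E × ℝ) * lam p.1 v)
    (c : ℝ → E × ℝ) (hc : ∀ t : ℝ, HasDerivAt c (X (c t)) t) :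
    ∀ t : ℝ,
      HasDerivAt (fun s => h (c s))
        (-(fderiv ℝ h (c t) ((0, 1) : E × ℝ)) * h (c t)) t := by
  intro t
  have hdiss : fderiv ℝ h (c t) (X (c t)) = -(fderiv ℝ h (c t) (0, 1)) * h (c t) :=
    apply_eq_neg_reeb_mul_of_contact_hamilton_eqns lam (fderiv ℝ h (c t)).toLinearMap
      (c t).1 (X (c t)) (h (c t)) (hX1 (c t)) (hX2 (c t))
  exact hdiss ▸ (hh (c t)).hasFDerivAt.comp_hasDerivAt t (hc t)

/-- **Dissipation of energy in contact mechanics.** In the linear contact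
model on `M = E × ℝ` with contact form `η_{(x,s)}(v,σ) = σ − λ(x)(v)` and Reeb vector
field `R = (0,1)`, let `X` be a contact Hamiltonian vector field of a differentiable
`h : E × ℝ → ℝ` and `c` an integral curve of `X`. Then the energy dissipates at rate
`−R(h)`: for every `t`, the function `t ↦ h(c(t))` has derivative
`−Dh_{c(t)}(0,1) · h(c(t))` at `t`. -/
theorem contact_energy_dissipation
    (E : Type*) [NormedAddCommGroup E] [NormedSpace ℝ E] [FiniteDimensional ℝ E]
    (lam : E →ₗ[ℝ] E →ₗ[ℝ] ℝ)
    (hnd : ∀ u : E, (∀ v : E, lam v u - lam u v = 0) → u = 0)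
    (h : E × ℝ → ℝ) (hh : Differentiable ℝ h)
    (X : E × ℝ → E × ℝ)
    (hX1 : ∀ p : E × ℝ, (X p).2 - lam p.1 (X p).1 = - h p)
    (hX2 : ∀ (p : E × ℝ) (v : E),
      lam v (X p).1 - lam (X p).1 v =
        fderiv ℝ h p (v, 0) + fderiv ℝ h p ((0, 1) : E × ℝ) * lam p.1 v)
    (c : ℝ → E × ℝ) (hc : ∀ t : ℝ, HasDerivAt c (X (c t)) t) :
    ∀ t : ℝ,
      HasDerivAt (fun s => h (c s))
        (-(fderiv ℝ h (c t) ((0, 1) : E × ℝ)) * h (c t)) t :=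
  contact_energy_dissipation_general E lam h hh X hX1 hX2 c hc
end

section
/- (Dissipation theorem.) In the linear contact model, let h : E × ℝ → ℝ be differentiable, let X be a differentiable contact Hamiltonian vector field of h, and let Y = (Y_E, Y_ℝ) : E × ℝ → E × ℝ be a differentiable vector field which is an infinitesimal dynamical symmetry, i.e. [X,Y] = 0: DY_p(X(p)) = DX_p(Y(p)) for all p. Then the function F(p) := −η_p(Y(p)) = λ(x)(Y_E(p)) − Y_ℝ(p) (for p = (x,s)) is a dissipated quantity: DF_p(X(p)) = −Dh_p(0,1)·F(p) for every p ∈ E × ℝ. -/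
/-!
Because `η(X) = -h`, the Hamiltonian is itself `h(q) = λ(x)(X_E(q)) - X_ℝ(q)`, of the same shape
as `F` with `X` in place of `Y`. Differentiating both by the product rule and using
`DY(X) = DX(Y)` gives `DF(X) = Dh(Y) - ω(X_E, Y_E)`. The second Hamilton equation at `v = Y_E`
reads `ω(X_E, Y_E) = Dh(Y_E, 0) + R(h) λ(x)(Y_E)`, while `Dh(Y) = Dh(Y_E, 0) + Y_ℝ R(h)`;
hence `DF(X) = -R(h) F`.
-/

section

variable {𝕜 : Type*} [NontriviallyNormedField 𝕜]

theorem ContinuousLinearMap.map_prod_eq_add_smul {E M : Type*} [NormedAddCommGroup E]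
    [NormedSpace 𝕜 E] [NormedAddCommGroup M] [NormedSpace 𝕜 M] (φ : E × 𝕜 →L[𝕜] M)
    (v : E × 𝕜) : φ v = φ (v.1, 0) + v.2 • φ (0, 1) := by
  rw [← map_smul, ← map_add]
  congr 1
  ext <;> simp

variable [CompleteSpace 𝕜] {E : Type*} [NormedAddCommGroup E] [NormedSpace 𝕜 E]
  [FiniteDimensional 𝕜 E]

theorem fderiv_pairing_fst_sub_snd_apply (lam : E →ₗ[𝕜] E →ₗ[𝕜] 𝕜) {Z : E × 𝕜 → E × 𝕜}
    {p : E × 𝕜} (hZ : DifferentiableAt 𝕜 Z p) (w : E × 𝕜) :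
    fderiv 𝕜 (fun q => lam q.1 (Z q).1 - (Z q).2) p w =
      lam p.1 (fderiv 𝕜 Z p w).1 + lam w.1 (Z p).1 - (fderiv 𝕜 Z p w).2 := by
  have hpair := lam.toContinuousBilinearMap.hasFDerivAt_of_bilinear hasFDerivAt_fst
    (hasFDerivAt_fst.comp p hZ.hasFDerivAt)
  have hF : HasFDerivAt (fun q => lam q.1 (Z q).1 - (Z q).2) _ p :=
    hpair.sub (hasFDerivAt_snd.comp p hZ.hasFDerivAt)
  rw [hF.fderiv]
  simp

end

theorem contact_dissipation_theorem_general
    (E : Type*) [NormedAddCommGroup E] [NormedSpace ℝ E] [FiniteDimensional ℝ E]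
    (lam : E →ₗ[ℝ] E →ₗ[ℝ] ℝ)
    (h : E × ℝ → ℝ)
    (X : E × ℝ → E × ℝ) (hXdiff : Differentiable ℝ X)
    (hX1 : ∀ p : E × ℝ, (X p).2 - lam p.1 (X p).1 = - h p)
    (hX2 : ∀ (p : E × ℝ) (v : E),
      lam v (X p).1 - lam (X p).1 v =
        fderiv ℝ h p (v, 0) + fderiv ℝ h p ((0, 1) : E × ℝ) * lam p.1 v)
    (Y : E × ℝ → E × ℝ) (hYdiff : Differentiable ℝ Y)
    (hcomm : ∀ p : E × ℝ, fderiv ℝ Y p (X p) = fderiv ℝ X p (Y p)) :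
    ∀ p : E × ℝ,
      fderiv ℝ (fun q => lam q.1 (Y q).1 - (Y q).2) p (X p) =
        -(fderiv ℝ h p ((0, 1) : E × ℝ)) * (lam p.1 (Y p).1 - (Y p).2) := by
  intro p
  have h_eq : (fun q => lam q.1 (X q).1 - (X q).2) = h := funext fun q => by linarith [hX1 q]
  have hDh : fderiv ℝ h p (Y p) =
      lam p.1 (fderiv ℝ X p (Y p)).1 + lam (Y p).1 (X p).1 - (fderiv ℝ X p (Y p)).2 := by
    rw [← h_eq]
    exact fderiv_pairing_fst_sub_snd_apply lam (hXdiff p) (Y p)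
  have hReeb := (fderiv ℝ h p).map_prod_eq_add_smul (Y p)
  rw [smul_eq_mul] at hReeb
  rw [fderiv_pairing_fst_sub_snd_apply lam (hYdiff p), hcomm p]
  linarith [hX2 p (Y p).1]

/-- **Dissipation theorem.** In the linear contact model on `M = E × ℝ`
with contact form `η_{(x,s)}(v,σ) = σ − λ(x)(v)` and Reeb vector field `R = (0,1)`, let
`X` be a differentiable contact Hamiltonian vector field of a differentiable
`h : E × ℝ → ℝ` and let `Y` be a differentiable infinitesimal dynamical symmetry
(`[X,Y] = 0`). Then `F(p) := −η_p(Y(p)) = λ(x)(Y_E(p)) − Y_ℝ(p)` is a dissipated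
quantity: `DF_p(X(p)) = −Dh_p(0,1)·F(p)` for every `p`. -/
theorem contact_dissipation_theorem
    (E : Type*) [NormedAddCommGroup E] [NormedSpace ℝ E] [FiniteDimensional ℝ E]
    (lam : E →ₗ[ℝ] E →ₗ[ℝ] ℝ)
    (hnd : ∀ u : E, (∀ v : E, lam v u - lam u v = 0) → u = 0)
    (h : E × ℝ → ℝ) (hh : Differentiable ℝ h)
    (X : E × ℝ → E × ℝ) (hXdiff : Differentiable ℝ X)
    (hX1 : ∀ p : E × ℝ, (X p).2 - lam p.1 (X p).1 = - h p)
    (hX2 : ∀ (p : E × ℝ) (v : E),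
      lam v (X p).1 - lam (X p).1 v =
        fderiv ℝ h p (v, 0) + fderiv ℝ h p ((0, 1) : E × ℝ) * lam p.1 v)
    (Y : E × ℝ → E × ℝ) (hYdiff : Differentiable ℝ Y)
    (hcomm : ∀ p : E × ℝ, fderiv ℝ Y p (X p) = fderiv ℝ X p (Y p)) :
    ∀ p : E × ℝ,
      fderiv ℝ (fun q => lam q.1 (Y q).1 - (Y q).2) p (X p) =
        -(fderiv ℝ h p ((0, 1) : E × ℝ)) * (lam p.1 (Y p).1 - (Y p).2) :=
  contact_dissipation_theorem_general E lam h X hXdiff hX1 hX2 Y hYdiff hcomm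
end
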